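/- Let a > 0. On a probability space, let Y be a real random variable whose law has a density φ with respect to Lebesgue measure satisfying φ(-u) = φ(u) for all u and φ nonincreasing on (0, ∞), and let A be uniformly distributed on [-a, a] and independent of Y. Then the product A·Y admits a density δ with respect to Lebesgue measure such that δ(-u) = δ(u) for all u and δ is nonincreasing on (0, ∞). -/

import Mathlib

open MeasureTheory ProbabilityTheory Set
open scoped ENNReal

/-- Key step in the induction proving Proposition 3.2 of the paper:
multiplying a random variable with an even density that is nonincreasing on
`(0, ∞)` by an independent uniform factor on `[-a, a]` preserves this
symmetric unimodal shape. -/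
theorem mul_uniform_preserves_symmetric_unimodal
    {Ω : Type*} [MeasurableSpace Ω] (P : Measure Ω) [IsProbabilityMeasure P]
    (a : ℝ) (ha : 0 < a)
    (Y A : Ω → ℝ) (hYmeas : Measurable Y) (hAmeas : Measurable A)
    (φ : ℝ → ℝ)
    (hφlaw : Measure.map Y P = volume.withDensity (fun u => ENNReal.ofReal (φ u)))
    (hφeven : ∀ u : ℝ, φ (-u) = φ u)
    (hφmono : AntitoneOn φ (Ioi (0:ℝ)))
    (hAlaw : Measure.map A P
      = (volume (Icc (-a) a))⁻¹ • volume.restrict (Icc (-a) a))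
    (hindep : IndepFun A Y P) :
    ∃ δ : ℝ → ℝ,
      Measure.map (fun ω => A ω * Y ω) P
        = volume.withDensity (fun u => ENNReal.ofReal (δ u)) ∧
      (∀ u : ℝ, δ (-u) = δ u) ∧
      AntitoneOn δ (Ioi (0:ℝ)) := by
  classical
  -- A measurable version of φ
  set F : ℝ → ℝ := fun x => φ (Real.exp x) with hF_def
  have hFanti : Antitone F := fun x y hxy =>
    hφmono (mem_Ioi.2 (Real.exp_pos x)) (mem_Ioi.2 (Real.exp_pos y)) (Real.exp_le_exp.2 hxy)
  have hFmeas : Measurable F := hFanti.measurable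
  set φ' : ℝ → ℝ := fun u => F (Real.log |u|) with hφ'_def
  have hφ'meas : Measurable φ' := hFmeas.comp (Real.measurable_log.comp measurable_abs)
  have hφ'eq : ∀ u : ℝ, u ≠ 0 → φ' u = φ u := by
    intro u hu
    have habs : 0 < |u| := abs_pos.2 hu
    have hexp : Real.exp (Real.log |u|) = |u| := Real.exp_log habs
    simp only [hφ'_def, hF_def, hexp]
    rcases abs_cases u with ⟨h, _⟩ | ⟨h, _⟩
    · rw [h]
    · rw [h, hφeven]
  have hφ'even : ∀ u, φ' (-u) = φ' u := by intro u; simp [hφ'_def, abs_neg]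
  have hφ'mono : AntitoneOn φ' (Ioi (0:ℝ)) := by
    intro x hx y hy hxy
    rw [hφ'eq x (ne_of_gt hx), hφ'eq y (ne_of_gt hy)]
    exact hφmono hx hy hxy
  set ψ : ℝ → ℝ≥0∞ := fun u => ENNReal.ofReal (φ' u) with hψ_def
  have hψmeas : Measurable ψ := hφ'meas.ennreal_ofReal
  have hψeven : ∀ u, ψ (-u) = ψ u := fun u => by simp [hψ_def, hφ'even]
  have hψanti : ∀ x y : ℝ, 0 < x → x ≤ y → ψ y ≤ ψ x := fun x y hx hxy =>
    ENNReal.ofReal_le_ofReal (hφ'mono (mem_Ioi.2 hx) (mem_Ioi.2 (lt_of_lt_of_le hx hxy)) hxy)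
  -- the law of Y has density ψ
  have hψlaw : Measure.map Y P = volume.withDensity ψ := by
    rw [hφlaw]
    refine withDensity_congr_ae ?_
    have h0 : (volume : Measure ℝ) {(0:ℝ)} = 0 := measure_singleton 0
    refine measure_mono_null (fun u hu => ?_) h0
    simp only [mem_compl_iff, mem_setOf_eq, mem_singleton_iff] at hu ⊢
    by_contra h
    refine hu ?_
    simp only [hψ_def]
    rw [hφ'eq u h]
  set μA : Measure ℝ := Measure.map A P with hμA_def
  have hμAprob : IsProbabilityMeasure μA := Measure.isProbabilityMeasure_map hAmeas.aemeasurable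
  have hμA0 : μA {(0:ℝ)} = 0 := by
    rw [hAlaw]
    simp only [Measure.smul_apply, Measure.restrict_apply (measurableSet_singleton (0:ℝ)),
      smul_eq_mul]
    have : volume ({(0:ℝ)} ∩ Icc (-a) a) = 0 :=
      measure_mono_null inter_subset_left (measure_singleton 0)
    rw [this, mul_zero]
  have hμAne0 : ∀ᵐ t ∂μA, t ≠ 0 := by
    rw [ae_iff]
    convert hμA0 using 2
    ext t; simp
  -- joint law is a product
  have hprod : Measure.map (fun ω => (A ω, Y ω)) P = μA.prod (Measure.map Y P) :=
    (indepFun_iff_map_prod_eq_prod_map_map hAmeas.aemeasurable hYmeas.aemeasurable).1 hindep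
  have hmapmul : Measure.map (fun ω => A ω * Y ω) P
      = Measure.map (fun p : ℝ × ℝ => p.1 * p.2) (μA.prod (volume.withDensity ψ)) := by
    rw [← hψlaw, ← hprod,
      Measure.map_map (g := fun p : ℝ × ℝ => p.1 * p.2) (measurable_fst.mul measurable_snd) (hAmeas.prodMk hYmeas)]
    rfl
  -- the density of the product
  set g : ℝ → ℝ → ℝ≥0∞ := fun u t => ψ (u / t) * ENNReal.ofReal |t|⁻¹ with hg_def
  have hgmeas : Measurable (fun p : ℝ × ℝ => g p.1 p.2) :=
    ((hψmeas.comp (measurable_fst.div measurable_snd)).mul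
      (measurable_snd.abs.inv.ennreal_ofReal))
  set δ' : ℝ → ℝ≥0∞ := fun u => ∫⁻ t, g u t ∂μA with hδ'_def
  have hδ'meas : Measurable δ' := hgmeas.lintegral_prod_right'
  -- substitution for a fixed t ≠ 0
  have hsub : ∀ t : ℝ, t ≠ 0 → ∀ s : Set ℝ, MeasurableSet s →
      (volume.withDensity ψ) ((fun y => t * y) ⁻¹' s) = ∫⁻ u in s, g u t ∂volume := by
    intro t ht s hs
    have hpre : MeasurableSet ((fun y => t * y) ⁻¹' s) := (measurable_const_mul t) hs
    rw [withDensity_apply _ hpre, ← lintegral_indicator hpre ψ]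
    have key : ∀ y : ℝ, ((fun y => t * y) ⁻¹' s).indicator ψ y
        = s.indicator (fun u => ψ (u / t)) (t * y) := by
      intro y
      by_cases h : t * y ∈ s
      · have hy : y ∈ (fun y => t * y) ⁻¹' s := h
        rw [indicator_of_mem hy, indicator_of_mem h, mul_div_cancel_left₀ y ht]
      · have hy : y ∉ (fun y => t * y) ⁻¹' s := h
        rw [indicator_of_notMem hy, indicator_of_notMem h]
    calc ∫⁻ y, ((fun y => t * y) ⁻¹' s).indicator ψ y ∂volume
        = ∫⁻ y, s.indicator (fun u => ψ (u / t)) (t * y) ∂volume := lintegral_congr key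
      _ = ∫⁻ u, s.indicator (fun u => ψ (u / t)) u ∂(Measure.map (fun y => t * y) volume) :=
          (lintegral_map ((hψmeas.comp (measurable_id.div_const t)).indicator hs)
            (measurable_const_mul t)).symm
      _ = ∫⁻ u in s, g u t ∂volume := by
          rw [Real.map_volume_mul_left ht, lintegral_smul_measure, lintegral_indicator hs _,
            smul_eq_mul, ← lintegral_const_mul' _ _ ENNReal.ofReal_ne_top]
          refine lintegral_congr fun u => ?_
          simp only [hg_def]
          rw [mul_comm, abs_inv]
  -- law of the product
  have htotal : Measure.map (fun ω => A ω * Y ω) P = volume.withDensity δ' := by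
    haveI : IsProbabilityMeasure (volume.withDensity ψ) :=
      hψlaw ▸ Measure.isProbabilityMeasure_map hYmeas.aemeasurable
    refine Measure.ext fun s hs => ?_
    rw [hmapmul, Measure.map_apply (f := fun p : ℝ × ℝ => p.1 * p.2) (measurable_fst.mul measurable_snd) hs,
      withDensity_apply _ hs,
      Measure.prod_apply (show MeasurableSet ((fun p : ℝ × ℝ => p.1 * p.2) ⁻¹' s) from
        (measurable_fst.mul measurable_snd) hs)]
    calc ∫⁻ t, (volume.withDensity ψ) (Prod.mk t ⁻¹' ((fun p : ℝ × ℝ => p.1 * p.2) ⁻¹' s)) ∂μA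
        = ∫⁻ t, ∫⁻ u in s, g u t ∂volume ∂μA := by
          refine lintegral_congr_ae ?_
          filter_upwards [hμAne0] with t ht
          exact hsub t ht s hs
      _ = ∫⁻ u in s, δ' u ∂volume := by
          have hf : AEMeasurable (Function.uncurry fun t u => g u t)
              (μA.prod (volume.restrict s)) :=
            (hgmeas.comp measurable_swap).aemeasurable
          rw [lintegral_lintegral_swap hf]
  -- total mass 1, hence a.e. finiteness
  have hprobtot : IsProbabilityMeasure (Measure.map (fun ω => A ω * Y ω) P) :=
    Measure.isProbabilityMeasure_map (hAmeas.mul hYmeas).aemeasurable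
  have hint1 : ∫⁻ u, δ' u ∂volume = 1 := by
    have := htotal ▸ hprobtot.measure_univ
    rwa [withDensity_apply _ MeasurableSet.univ, Measure.restrict_univ] at this
  have haefin : ∀ᵐ u ∂(volume : Measure ℝ), δ' u < ∞ :=
    ae_lt_top hδ'meas (by rw [hint1]; exact ENNReal.one_ne_top)
  -- evenness of δ'
  have hδ'even : ∀ u, δ' (-u) = δ' u := by
    intro u
    simp only [hδ'_def]
    refine lintegral_congr fun t => ?_
    simp only [hg_def, neg_div, hψeven]
  -- antitonicity of δ'
  have hδ'anti : ∀ u v : ℝ, 0 < u → u ≤ v → δ' v ≤ δ' u := by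
    intro u v hu huv
    refine lintegral_mono_ae ?_
    filter_upwards [hμAne0] with t ht
    have key : ψ (v / t) ≤ ψ (u / t) := by
      rcases ht.lt_or_gt with hneg | hpos
      · have e1 : v / t = -(v / (-t)) := by rw [div_neg, neg_neg]
        have e2 : u / t = -(u / (-t)) := by rw [div_neg, neg_neg]
        rw [e1, e2, hψeven, hψeven]
        refine hψanti _ _ (div_pos hu (neg_pos.2 hneg)) ?_
        gcongr
        exact (neg_pos.2 hneg).le
      · refine hψanti _ _ (div_pos hu hpos) ?_
        gcongr
    exact mul_le_mul_left key _
  -- δ' is finite on (0, ∞)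
  have hfin : ∀ u : ℝ, 0 < u → δ' u ≠ ∞ := by
    intro u hu
    intro h
    have hsubset : Ioc (0:ℝ) u ⊆ {w | δ' w = ∞} := by
      intro w hw
      exact top_le_iff.1 (h ▸ hδ'anti w u hw.1 hw.2)
    have hnull : volume {w : ℝ | δ' w = ∞} = 0 := by
      have h2 := haefin
      rw [ae_iff] at h2
      convert h2 using 2
      ext w; simp [lt_top_iff_ne_top]
    have : volume (Ioc (0:ℝ) u) = 0 := measure_mono_null hsubset hnull
    rw [Real.volume_Ioc] at this
    simp only [sub_zero, ENNReal.ofReal_eq_zero] at this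
    linarith
  -- conclude
  refine ⟨fun u => (δ' u).toReal, ?_, ?_, ?_⟩
  · rw [htotal]
    refine (withDensity_congr_ae ?_).symm
    filter_upwards [haefin] with u hu
    rw [ENNReal.ofReal_toReal hu.ne]
  · intro u; exact congrArg ENNReal.toReal (hδ'even u)
  · intro x hx y hy hxy
    exact (ENNReal.toReal_le_toReal (hfin y hy) (hfin x hx)).2 (hδ'anti x y hx hxy)
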